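/- With the norms ‖·‖ and |||·||| on c₀ defined via Q(x,j) as above, for every x ∈ c₀ and every ε > 0 there exist m ∈ ℕ and δ > 0 such that for all y ∈ ℓ_∞ with sup_{k>m} |y(k)| > ε, one has max{‖x+y‖, ‖x−y‖} ≥ ‖x‖ + δ. -/

import Mathlib

open Filter Topology BoundedContinuousFunction

/-!
Beyond some `m` the coordinates of `x ∈ c₀` are at most `ε / 10`. Given admissible `(j, p)`, cut it
at the last position `q ≤ m` with `j q < k`: every later index exceeds `m`, so the cut costs at
most `2^(-q) ε / 10`. Appending `k` to the cut sequence shows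
`Q(x + y, j, q) + 2^(-q-1) (x + y)(k)⁺ ≤ ‖x + y‖`, while `Q(·, j, q)` is midpoint convex,
`2 Q(x, j, q) ≤ Q(x + y, j, q) + Q(x - y, j, q)`. As `(x + y)(k) ≥ 9ε / 10` when `y k > ε`, this
gives `Q(x, j, p) ≤ max {‖x + y‖, ‖x - y‖} - 2^(-m) ε / 8`.
-/

/-- `Q(x,j)` for a strictly increasing sequence `j` truncated at index `p`. -/
noncomputable def Qfun (x : ℕ →ᵇ ℝ) (j : ℕ → ℕ) (p : ℕ) : ℝ :=
  |x (j 0)| + ∑ k ∈ Finset.Icc 1 p, (1/2 : ℝ) ^ k * max (x (j k)) 0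

/-- `‖x‖ = sup_j Q(x,j)`. -/
noncomputable def NrmQ (x : ℕ →ᵇ ℝ) : ℝ :=
  sSup {r : ℝ | ∃ (j : ℕ → ℕ) (p : ℕ), StrictMono j ∧ r = Qfun x j p}

lemma Qfun_zero (x : ℕ →ᵇ ℝ) (j : ℕ → ℕ) : Qfun x j 0 = |x (j 0)| := by
  simp [Qfun]

lemma sum_Ioc_half_pow_le (q p : ℕ) : ∑ k ∈ Finset.Ioc q p, (1 / 2 : ℝ) ^ k ≤ (1 / 2) ^ q := by
  calc ∑ k ∈ Finset.Ioc q p, (1 / 2 : ℝ) ^ k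
      = ∑ k ∈ Finset.Ico (q + 1) (p + 1), (1 / 2 : ℝ) ^ k := by
        rw [← Finset.Ico_add_one_add_one_eq_Ioc]
    _ ≤ (1 / 2) ^ (q + 1) / (1 - 1 / 2) := geom_sum_Ico_le_of_lt_one (by norm_num) (by norm_num)
    _ = (1 / 2) ^ q := by rw [pow_succ]; ring

lemma Qfun_le_add_of_tail_le {x : ℕ →ᵇ ℝ} {j : ℕ → ℕ} {q p : ℕ} {η : ℝ} (hqp : q ≤ p)
    (hη : 0 ≤ η) (htail : ∀ i, q < i → i ≤ p → x (j i) ≤ η) :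
    Qfun x j p ≤ Qfun x j q + (1 / 2) ^ q * η := by
  have hIcc : ∀ n, Finset.Icc 1 n = Finset.Ioc 0 n := fun _ => rfl
  have htail_sum : ∑ k ∈ Finset.Ioc q p, (1 / 2 : ℝ) ^ k * max (x (j k)) 0 ≤ (1 / 2) ^ q * η :=
    calc ∑ k ∈ Finset.Ioc q p, (1 / 2 : ℝ) ^ k * max (x (j k)) 0
        ≤ ∑ k ∈ Finset.Ioc q p, (1 / 2 : ℝ) ^ k * η := by
          refine Finset.sum_le_sum fun i hi => ?_
          obtain ⟨hqi, hip⟩ := Finset.mem_Ioc.1 hi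
          gcongr
          exact max_le (htail i hqi hip) hη
      _ ≤ (1 / 2) ^ q * η := by
          rw [← Finset.sum_mul]
          exact mul_le_mul_of_nonneg_right (sum_Ioc_half_pow_le q p) hη
  simp only [Qfun, hIcc, ← Finset.sum_Ioc_consecutive _ (Nat.zero_le q) hqp]
  linarith

lemma two_mul_Qfun_le_add (x y : ℕ →ᵇ ℝ) (j : ℕ → ℕ) (p : ℕ) :
    2 * Qfun x j p ≤ Qfun (x + y) j p + Qfun (x - y) j p := by
  have hhead (a b : ℝ) : 2 * |a| ≤ |a + b| + |a - b| := by
    calc 2 * |a| = |(a + b) + (a - b)| := by rw [add_add_sub_cancel, ← two_mul, abs_mul, abs_two]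
      _ ≤ |a + b| + |a - b| := abs_add_le _ _
  have hpos (a b : ℝ) : 2 * max a 0 ≤ max (a + b) 0 + max (a - b) 0 := by
    rcases le_total a 0 with ha | ha
    · simp only [max_eq_right ha]
      linarith [le_max_right (a + b) 0, le_max_right (a - b) 0]
    · simp only [max_eq_left ha]
      linarith [le_max_left (a + b) 0, le_max_left (a - b) 0]
  simp only [Qfun, coe_add, coe_sub, Pi.add_apply, Pi.sub_apply, mul_add, Finset.mul_sum,
    add_add_add_comm _ (∑ _ ∈ _, _), ← Finset.sum_add_distrib]
  gcongr with i
  · exact hhead _ _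
  · rw [mul_left_comm, ← mul_add]
    gcongr
    exact hpos _ _

lemma Qfun_le_two_mul_norm (x : ℕ →ᵇ ℝ) (j : ℕ → ℕ) (p : ℕ) : Qfun x j p ≤ 2 * ‖x‖ := by
  have hcoord (n : ℕ) : |x n| ≤ ‖x‖ := by simpa using x.norm_coe_le_norm n
  have := Qfun_le_add_of_tail_le (x := x) (j := j) (Nat.zero_le p) (norm_nonneg x)
    fun i _ _ => (le_abs_self _).trans (hcoord _)
  rw [Qfun_zero, pow_zero, one_mul] at this
  linarith [hcoord (j 0)]

lemma Qfun_le_NrmQ (x : ℕ →ᵇ ℝ) {j : ℕ → ℕ} (hj : StrictMono j) (p : ℕ) :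
    Qfun x j p ≤ NrmQ x :=
  le_csSup ⟨2 * ‖x‖, by rintro r ⟨j, p, -, rfl⟩; exact Qfun_le_two_mul_norm x j p⟩ ⟨j, p, hj, rfl⟩

lemma NrmQ_le_of_forall_Qfun_le {x : ℕ →ᵇ ℝ} {c : ℝ}
    (h : ∀ j p, StrictMono j → Qfun x j p ≤ c) : NrmQ x ≤ c :=
  csSup_le ⟨_, id, 0, strictMono_id, rfl⟩ fun _ ⟨j, p, hj, hr⟩ => hr ▸ h j p hj

lemma abs_apply_le_NrmQ (x : ℕ →ᵇ ℝ) (n : ℕ) : |x n| ≤ NrmQ x := by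
  simpa [Qfun_zero] using Qfun_le_NrmQ x (strictMono_id.const_add n) 0

lemma StrictMono.exists_eqOn_succ_eq {j : ℕ → ℕ} (hj : StrictMono j) {q k : ℕ} (hk : j q < k) :
    ∃ j' : ℕ → ℕ, StrictMono j' ∧ (∀ i ≤ q, j' i = j i) ∧ j' (q + 1) = k := by
  refine ⟨fun i => if i ≤ q then j i else k + (i - (q + 1)), ?_, fun i hi => if_pos hi, by simp⟩
  refine strictMono_nat_of_lt_succ fun n => ?_
  rcases Nat.lt_trichotomy n q with h | rfl | h
  · simpa [h.le, Nat.succ_le_of_lt h] using hj n.lt_succ_self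
  · simpa using hk
  · simp only [if_neg (show ¬n ≤ q by omega), if_neg (show ¬n + 1 ≤ q by omega)]
    omega

lemma Qfun_add_half_pow_le_NrmQ (z : ℕ →ᵇ ℝ) {j : ℕ → ℕ} (hj : StrictMono j) {q k : ℕ}
    (hk : j q < k) : Qfun z j q + (1 / 2) ^ (q + 1) * max (z k) 0 ≤ NrmQ z := by
  obtain ⟨j', hj', hagree, hq⟩ := hj.exists_eqOn_succ_eq hk
  have hQ : Qfun z j' (q + 1) = Qfun z j q + (1 / 2) ^ (q + 1) * max (z k) 0 := by
    simp only [Qfun, Finset.sum_Icc_succ_top (Nat.le_add_left 1 q), hagree 0 (Nat.zero_le q), hq]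
    rw [Finset.sum_congr rfl fun i hi => by rw [hagree i (Finset.mem_Icc.1 hi).2]]
    ring
  exact hQ ▸ Qfun_le_NrmQ z hj' (q + 1)

lemma StrictMono.exists_last_lt {j : ℕ → ℕ} (hj : StrictMono j) {k : ℕ} (hj0 : j 0 < k) (p m : ℕ)
    (hk : m < k) : ∃ q ≤ min p m, j q < k ∧ ∀ i, q < i → i ≤ p → m < j i := by
  refine ⟨Nat.findGreatest (fun i => j i < k) (min p m), Nat.findGreatest_le _,
    Nat.findGreatest_spec (P := fun i => j i < k) (Nat.zero_le _) hj0, fun i hqi hip => ?_⟩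
  by_cases him : i ≤ m
  · exact hk.trans_le <| not_lt.1 <|
      Nat.findGreatest_is_greatest (P := fun i => j i < k) hqi (le_min hip him)
  · exact (not_le.1 him).trans_le hj.le_apply

section SmallTail

variable {x y : ℕ →ᵇ ℝ} {ε : ℝ} {m k : ℕ}

lemma Qfun_le_of_forall_gt (hm : ∀ n > m, |x n| ≤ ε / 10) {j : ℕ → ℕ} (hj : ∀ i, m < j i)
    (p : ℕ) : Qfun x j p ≤ ε / 5 := by
  have htail := Qfun_le_add_of_tail_le (x := x) (j := j) (Nat.zero_le p)
    ((abs_nonneg _).trans (hm _ (hj 0))) fun i _ _ => (le_abs_self _).trans (hm _ (hj i))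
  rw [Qfun_zero, pow_zero, one_mul] at htail
  linarith [hm _ (hj 0)]

lemma Qfun_add_le_max_NrmQ (hm : ∀ n > m, |x n| ≤ ε / 10) (hk : k > m) (hyk : ε < y k)
    {j : ℕ → ℕ} (hj : StrictMono j) (p : ℕ) :
    Qfun x j p + (1 / 2) ^ m * (ε / 8) ≤ max (NrmQ (x + y)) (NrmQ (x - y)) := by
  have hε : 0 ≤ ε := by linarith [(abs_nonneg _).trans (hm k hk)]
  have hxyk : 9 * ε / 10 ≤ (x + y) k := by
    simp only [coe_add, Pi.add_apply]
    linarith [neg_abs_le (x k), hm k hk]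
  have hM := le_max_left (NrmQ (x + y)) (NrmQ (x - y))
  rcases lt_or_ge (j 0) k with hj0 | hj0
  · obtain ⟨q, hq, hjq, hgt⟩ := hj.exists_last_lt hj0 p m hk
    have htail : Qfun x j p ≤ Qfun x j q + (1 / 2) ^ q * (ε / 10) :=
      Qfun_le_add_of_tail_le (hq.trans (min_le_left _ _)) (by linarith)
        fun i hqi hip => (le_abs_self _).trans (hm _ (hgt i hqi hip))
    have hmid := two_mul_Qfun_le_add x y j q
    have hplus := Qfun_add_half_pow_le_NrmQ (x + y) hj hjq
    have hminus := (Qfun_le_NrmQ (x - y) hj q).trans (le_max_right (NrmQ (x + y)) _)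
    have hgain : (1 / 2) ^ (q + 1) * (9 * ε / 10) ≤ (1 / 2) ^ (q + 1) * max ((x + y) k) 0 := by
      gcongr
      exact hxyk.trans (le_max_left _ _)
    have hpow : (1 / 2 : ℝ) ^ m * (ε / 8) ≤ (1 / 2) ^ q * (ε / 8) := by
      refine mul_le_mul_of_nonneg_right ?_ (by linarith)
      exact pow_le_pow_of_le_one (by norm_num) (by norm_num) (hq.trans (min_le_right _ _))
    rw [pow_succ] at hgain hplus
    linarith
  · have hsmall := Qfun_le_of_forall_gt hm
      (fun i => hk.trans_le (hj0.trans (hj.monotone (Nat.zero_le i)))) p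
    have hplus := (hxyk.trans (le_abs_self _)).trans (abs_apply_le_NrmQ (x + y) k)
    have hδ : (1 / 2 : ℝ) ^ m * (ε / 8) ≤ ε / 8 :=
      mul_le_of_le_one_left (by linarith) (pow_le_one₀ (by norm_num) (by norm_num))
    linarith

lemma NrmQ_add_le_max_NrmQ (hm : ∀ n > m, |x n| ≤ ε / 10) (hk : k > m) (hyk : ε < y k) :
    NrmQ x + (1 / 2) ^ m * (ε / 8) ≤ max (NrmQ (x + y)) (NrmQ (x - y)) := by
  have := NrmQ_le_of_forall_Qfun_le fun j p hj =>
    le_sub_iff_add_le.2 (Qfun_add_le_max_NrmQ hm hk hyk hj p)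
  linarith

end SmallTail

/-- Claim 4.2: for every `x ∈ c₀` and `ε > 0` there are `m` and `δ > 0` such that every
`y ∈ ℓ∞` with `sup_{k>m} |y(k)| > ε` satisfies `max{‖x+y‖, ‖x−y‖} ≥ ‖x‖ + δ`. -/
theorem stmt17 (x : ℕ →ᵇ ℝ) (hx : Tendsto (⇑x) atTop (nhds 0)) :
    ∀ ε > (0 : ℝ), ∃ (m : ℕ) (δ : ℝ), 0 < δ ∧
      ∀ y : ℕ →ᵇ ℝ, (∃ k > m, ε < |y k|) →
        NrmQ x + δ ≤ max (NrmQ (x + y)) (NrmQ (x - y)) := by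
  intro ε hε
  obtain ⟨m, hm⟩ : ∃ m, ∀ n > m, |x n| ≤ ε / 10 := by
    obtain ⟨m, hm⟩ := eventually_atTop.1
      (hx.eventually (Metric.closedBall_mem_nhds 0 (by positivity : 0 < ε / 10)))
    exact ⟨m, fun n hn => by simpa [Real.dist_eq] using hm n hn.le⟩
  refine ⟨m, (1 / 2) ^ m * (ε / 8), by positivity, ?_⟩
  rintro y ⟨k, hk, hyk⟩
  rcases lt_abs.1 hyk with hpos | hneg
  · exact NrmQ_add_le_max_NrmQ hm hk hpos
  · simpa [← sub_eq_add_neg, max_comm] using NrmQ_add_le_max_NrmQ (y := -y) hm hk hneg
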